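/- Let U ≥ 1, S ≥ 1, and let γ : Fin U → Fin S → ℝ with γ_{u,i} > 0 for all u, i. For each user u define I_u := (1/S)·Σ_{i} ∫_ℂ f_{γ_{u,i}}(y) · log2( f_{γ_{u,i}}(y) / ((1/S)·Σ_{j} f_{γ_{u,j}}(y)) ) dy, where f_γ is the circularly-symmetric complex Gaussian density with variance γ. Then Σ_{u} I_u ≥ Σ_{u} [ log2(S/e) − (1/S)·Σ_{i} log2( Σ_{j} γ_{u,i}/(γ_{u,i} + γ_{u,j}) ) ]. (This is the rigorous lower-bound content of Lemma 3 of the paper for the achievable spectral efficiency of the multi-user SPIM system, before the asymptotic bias compensation that yields the closed form (28).) -/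

import Mathlib

open MeasureTheory

/-- The circularly-symmetric complex Gaussian density with variance `γ`. -/
noncomputable def gaussDensity (γ : ℝ) (y : ℂ) : ℝ :=
  (Real.pi * γ)⁻¹ * Real.exp (-(‖y‖) ^ 2 / γ)

section aux

open Real

lemma gd_pos {b : ℝ} (hb : 0 < b) (y : ℂ) : 0 < gaussDensity b y := by
  unfold gaussDensity
  have := Real.pi_pos
  positivity

lemma gd_cont (b : ℝ) : Continuous (gaussDensity b) := by
  unfold gaussDensity
  exact continuous_const.mul (Real.continuous_exp.comp
    (((continuous_norm.pow 2).neg).div_const b))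

lemma integrable_exp_gauss {b : ℝ} (hb : 0 < b) :
    Integrable (fun y : ℂ => Real.exp (-(‖y‖) ^ 2 / b)) := by
  have h1 : Integrable (fun x : ℝ => Real.exp (-b⁻¹ * x ^ 2)) :=
    integrable_exp_neg_mul_sq (by positivity)
  have h2 : Integrable (fun p : ℝ × ℝ =>
      Real.exp (-b⁻¹ * p.1 ^ 2) * Real.exp (-b⁻¹ * p.2 ^ 2)) := by
    rw [MeasureTheory.Measure.volume_eq_prod ℝ ℝ]
    exact h1.mul_prod h1
  have h3 := (Complex.volume_preserving_equiv_real_prod.integrable_comp_emb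
    Complex.measurableEquivRealProd.measurableEmbedding).2 h2
  refine h3.congr (Filter.Eventually.of_forall fun y => ?_)
  simp only [Function.comp_apply, Complex.measurableEquivRealProd_apply]
  rw [← Real.exp_add, Complex.sq_norm, Complex.normSq_apply]
  congr 1
  ring

lemma integrable_sq_exp_gauss {b : ℝ} (hb : 0 < b) :
    Integrable (fun y : ℂ => (‖y‖) ^ 2 * Real.exp (-(‖y‖) ^ 2 / b)) := by
  have hb' : (0:ℝ) < b⁻¹ := by positivity
  have h1 : Integrable (fun x : ℝ => Real.exp (-b⁻¹ * x ^ 2)) :=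
    integrable_exp_neg_mul_sq hb'
  have h1' : Integrable (fun x : ℝ => x ^ 2 * Real.exp (-b⁻¹ * x ^ 2)) := by
    have := integrable_rpow_mul_exp_neg_mul_sq hb' (s := 2) (by norm_num)
    refine this.congr (Filter.Eventually.of_forall fun x => ?_)
    norm_num
  have h2 : Integrable (fun p : ℝ × ℝ =>
      (p.1 ^ 2 * Real.exp (-b⁻¹ * p.1 ^ 2)) * Real.exp (-b⁻¹ * p.2 ^ 2)
      + Real.exp (-b⁻¹ * p.1 ^ 2) * (p.2 ^ 2 * Real.exp (-b⁻¹ * p.2 ^ 2))) := by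
    rw [MeasureTheory.Measure.volume_eq_prod ℝ ℝ]
    exact (h1'.mul_prod h1).add (h1.mul_prod h1')
  have h3 := (Complex.volume_preserving_equiv_real_prod.integrable_comp_emb
    Complex.measurableEquivRealProd.measurableEmbedding).2 h2
  refine h3.congr (Filter.Eventually.of_forall fun y => ?_)
  simp only [Function.comp_apply, Complex.measurableEquivRealProd_apply]
  rw [Complex.sq_norm, Complex.normSq_apply]
  have : Real.exp (-(y.re * y.re + y.im * y.im) / b)
      = Real.exp (-b⁻¹ * y.re ^ 2) * Real.exp (-b⁻¹ * y.im ^ 2) := by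
    rw [← Real.exp_add]; congr 1; field_simp; ring
  rw [this]; ring

lemma integral_exp_gauss {b : ℝ} (hb : 0 < b) :
    ∫ y : ℂ, Real.exp (-(‖y‖) ^ 2 / b) = Real.pi * b := by
  have h := Complex.integral_exp_neg_mul_rpow (p := 2) (b := b⁻¹) one_le_two (by positivity)
  have heq : (fun y : ℂ => Real.exp (-(‖y‖) ^ 2 / b))
      = fun y : ℂ => Real.exp (-b⁻¹ * ‖y‖ ^ (2:ℝ)) := by
    funext y
    rw [Real.rpow_two]
    congr 1
    field_simp
  rw [heq, h]
  rw [show (-2 / 2 : ℝ) = -1 by norm_num, Real.rpow_neg_one, inv_inv,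
    show (2 / 2 + 1 : ℝ) = 2 by norm_num, Real.Gamma_two]
  ring

lemma integral_sq_exp_gauss {b : ℝ} (hb : 0 < b) :
    ∫ y : ℂ, (‖y‖) ^ 2 * Real.exp (-(‖y‖) ^ 2 / b) = Real.pi * b ^ 2 := by
  have h := Complex.integral_rpow_mul_exp_neg_mul_rpow (p := 2) (q := 2) (b := b⁻¹)
    one_le_two (by norm_num) (by positivity)
  have heq : (fun y : ℂ => (‖y‖) ^ 2 * Real.exp (-(‖y‖) ^ 2 / b))
      = fun y : ℂ => ‖y‖ ^ (2:ℝ) * Real.exp (-b⁻¹ * ‖y‖ ^ (2:ℝ)) := by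
    funext y
    rw [Real.rpow_two]
    congr 2
    field_simp
  rw [heq, h]
  have hbb : ((b:ℝ)⁻¹) ^ (-(2 + 2) / 2 : ℝ) = b ^ 2 := by
    rw [show (-(2 + 2) / 2 : ℝ) = -2 by norm_num,
      Real.rpow_neg (inv_nonneg.2 hb.le), Real.rpow_two, inv_pow, inv_inv]
  rw [hbb, show ((2 + 2) / 2 : ℝ) = 2 by norm_num, Real.Gamma_two]
  ring

lemma integrable_gauss {b : ℝ} (hb : 0 < b) : Integrable (gaussDensity b) := by
  unfold gaussDensity
  exact (integrable_exp_gauss hb).const_mul _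

lemma integral_gauss {b : ℝ} (hb : 0 < b) : ∫ y : ℂ, gaussDensity b y = 1 := by
  unfold gaussDensity
  rw [MeasureTheory.integral_const_mul, integral_exp_gauss hb]
  have := Real.pi_pos
  field_simp

lemma integrable_sq_gauss {b : ℝ} (hb : 0 < b) :
    Integrable (fun y : ℂ => (‖y‖) ^ 2 * gaussDensity b y) := by
  unfold gaussDensity
  have := (integrable_sq_exp_gauss hb).const_mul (Real.pi * b)⁻¹
  refine this.congr (Filter.Eventually.of_forall fun y => ?_)
  ring

lemma integral_sq_gauss {b : ℝ} (hb : 0 < b) :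
    ∫ y : ℂ, (‖y‖) ^ 2 * gaussDensity b y = b := by
  unfold gaussDensity
  have heq : (fun y : ℂ => (‖y‖) ^ 2 * ((Real.pi * b)⁻¹
      * Real.exp (-(‖y‖) ^ 2 / b)))
      = fun y : ℂ => (Real.pi * b)⁻¹ * ((‖y‖) ^ 2
      * Real.exp (-(‖y‖) ^ 2 / b)) := by
    funext y; ring
  rw [heq, MeasureTheory.integral_const_mul, integral_sq_exp_gauss hb]
  have := Real.pi_pos
  field_simp

lemma gauss_mul_gauss {a b : ℝ} (ha : 0 < a) (hb : 0 < b) :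
    (fun y : ℂ => gaussDensity a y * gaussDensity b y)
      = fun y : ℂ => ((Real.pi * a) * (Real.pi * b))⁻¹
          * Real.exp (-(‖y‖) ^ 2 / (a * b / (a + b))) := by
  funext y
  unfold gaussDensity
  have hab : a + b ≠ 0 := by positivity
  have harg : -(‖y‖) ^ 2 / a + -(‖y‖) ^ 2 / b
      = -(‖y‖) ^ 2 / (a * b / (a + b)) := by
    field_simp
    ring
  rw [mul_mul_mul_comm, ← Real.exp_add, harg, ← mul_inv]

lemma integrable_gauss_mul_gauss {a b : ℝ} (ha : 0 < a) (hb : 0 < b) :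
    Integrable (fun y : ℂ => gaussDensity a y * gaussDensity b y) := by
  rw [gauss_mul_gauss ha hb]
  exact (integrable_exp_gauss (by positivity)).const_mul _

lemma integral_gauss_mul_gauss {a b : ℝ} (ha : 0 < a) (hb : 0 < b) :
    ∫ y : ℂ, gaussDensity a y * gaussDensity b y = (Real.pi * (a + b))⁻¹ := by
  rw [gauss_mul_gauss ha hb, MeasureTheory.integral_const_mul,
    integral_exp_gauss (by positivity : (0:ℝ) < a * b / (a + b))]
  have := Real.pi_pos
  field_simp

lemma log_gauss {b : ℝ} (hb : 0 < b) (y : ℂ) :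
    Real.log (gaussDensity b y) = -Real.log (Real.pi * b) - (‖y‖) ^ 2 / b := by
  unfold gaussDensity
  have := Real.pi_pos
  rw [Real.log_mul (by positivity) (Real.exp_ne_zero _), Real.log_inv, Real.log_exp]
  ring

lemma integrable_gauss_mul_log_gauss {b : ℝ} (hb : 0 < b) :
    Integrable (fun y : ℂ => gaussDensity b y * Real.log (gaussDensity b y)) := by
  have heq : (fun y : ℂ => gaussDensity b y * Real.log (gaussDensity b y))
      = fun y : ℂ => (-Real.log (Real.pi * b)) * gaussDensity b y
          - b⁻¹ * ((‖y‖) ^ 2 * gaussDensity b y) := by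
    funext y
    rw [log_gauss hb]
    field_simp
  rw [heq]
  exact ((integrable_gauss hb).const_mul _).sub ((integrable_sq_gauss hb).const_mul _)

lemma integral_gauss_mul_log_gauss {b : ℝ} (hb : 0 < b) :
    ∫ y : ℂ, gaussDensity b y * Real.log (gaussDensity b y)
      = -Real.log (Real.pi * b) - 1 := by
  have heq : (fun y : ℂ => gaussDensity b y * Real.log (gaussDensity b y))
      = fun y : ℂ => (-Real.log (Real.pi * b)) * gaussDensity b y
          - b⁻¹ * ((‖y‖) ^ 2 * gaussDensity b y) := by
    funext y
    rw [log_gauss hb]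
    field_simp
  rw [heq, MeasureTheory.integral_sub (((integrable_gauss hb)).const_mul _)
    ((integrable_sq_gauss hb).const_mul _),
    MeasureTheory.integral_const_mul, MeasureTheory.integral_const_mul,
    integral_gauss hb, integral_sq_gauss hb]
  field_simp

end aux

/-- Key single-(u,i) estimate. -/
lemma key_estimate {S : ℕ} (hS : 1 ≤ S) (g : Fin S → ℝ) (hg : ∀ j, 0 < g j) (i : Fin S) :
    ∫ y : ℂ, gaussDensity (g i) y *
        Real.logb 2 (gaussDensity (g i) y / ((1 / (S : ℝ)) * ∑ j, gaussDensity (g j) y))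
      ≥ Real.logb 2 ((S : ℝ) / Real.exp 1) - Real.logb 2 (∑ j, g i / (g i + g j)) := by
  have hS0 : (0:ℝ) < (S:ℝ) := by exact_mod_cast hS
  have hpi := Real.pi_pos
  have hne : Nonempty (Fin S) := ⟨i⟩
  have hgi := hg i
  set q : ℂ → ℝ := fun y => (1 / (S : ℝ)) * ∑ j, gaussDensity (g j) y with hq_def
  have hq_pos : ∀ y, 0 < q y := fun y =>
    mul_pos (by positivity)
      (Finset.sum_pos (fun j _ => gd_pos (hg j) y) Finset.univ_nonempty)
  have hq_cont : Continuous q :=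
    continuous_const.mul (continuous_finset_sum _ fun j _ => (gd_cont (g j)))
  set M : ℝ := (1 / (S : ℝ)) * ∑ j : Fin S, (Real.pi * g j)⁻¹ with hM_def
  have hM_pos : 0 < M :=
    mul_pos (by positivity)
      (Finset.sum_pos (fun j _ => by have := hg j; positivity) Finset.univ_nonempty)
  have hq_le : ∀ y, q y ≤ M := fun y => by
    rw [hq_def, hM_def]
    refine mul_le_mul_of_nonneg_left (Finset.sum_le_sum fun j _ => ?_) (by positivity)
    unfold gaussDensity
    have hgj := hg j
    have h1 : Real.exp (-(‖y‖) ^ 2 / g j) ≤ 1 := by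
      rw [← Real.exp_zero]
      apply Real.exp_le_exp.2
      have h0 : (0:ℝ) ≤ (‖y‖) ^ 2 := by positivity
      apply div_nonpos_of_nonpos_of_nonneg (by linarith) hgj.le
    calc (Real.pi * g j)⁻¹ * Real.exp (-(‖y‖) ^ 2 / g j)
        ≤ (Real.pi * g j)⁻¹ * 1 := by
          exact mul_le_mul_of_nonneg_left h1 (by positivity)
      _ = (Real.pi * g j)⁻¹ := mul_one _
  have hq_ge : ∀ y, (1 / (S:ℝ)) * gaussDensity (g i) y ≤ q y := fun y => by
    rw [hq_def]
    exact mul_le_mul_of_nonneg_left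
      (Finset.single_le_sum (fun j _ => (gd_pos (hg j) y).le) (Finset.mem_univ i))
      (by positivity)
  set C : ℝ := |Real.log M| + |Real.log (S:ℝ)| + |Real.log (Real.pi * g i)| with hC_def
  have habs_logq : ∀ y, |Real.log (q y)| ≤ C + (‖y‖) ^ 2 / g i := fun y => by
    have ht : (0:ℝ) ≤ (‖y‖) ^ 2 / g i := by positivity
    rw [abs_le]
    constructor
    · have h1 : Real.log ((1/(S:ℝ)) * gaussDensity (g i) y) ≤ Real.log (q y) :=
        Real.log_le_log (mul_pos (by positivity) (gd_pos hgi y)) (hq_ge y)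
      have h2 : Real.log ((1/(S:ℝ)) * gaussDensity (g i) y)
          = -Real.log (S:ℝ) + (-Real.log (Real.pi * g i) - (‖y‖) ^ 2 / g i) := by
        rw [Real.log_mul (by positivity) (ne_of_gt (gd_pos hgi y)), log_gauss hgi y,
          one_div, Real.log_inv]
      have h3 := le_abs_self (Real.log (S:ℝ))
      have h4 := le_abs_self (Real.log (Real.pi * g i))
      have h5 := abs_nonneg (Real.log M)
      rw [h2] at h1
      rw [hC_def]
      linarith
    · have h1 : Real.log (q y) ≤ Real.log M := Real.log_le_log (hq_pos y) (hq_le y)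
      have h3 := le_abs_self (Real.log M)
      have h4 := abs_nonneg (Real.log (S:ℝ))
      have h5 := abs_nonneg (Real.log (Real.pi * g i))
      rw [hC_def]
      linarith
  -- integrabilities
  have h1 : Integrable (fun y : ℂ => gaussDensity (g i) y * Real.log (gaussDensity (g i) y)) :=
    integrable_gauss_mul_log_gauss hgi
  have hD : Integrable (fun y : ℂ =>
      gaussDensity (g i) y * (C + (‖y‖) ^ 2 / g i)) := by
    have := ((integrable_gauss hgi).const_mul C).add
      ((integrable_sq_gauss hgi).const_mul (g i)⁻¹)
    refine this.congr (Filter.Eventually.of_forall fun y => ?_)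
    field_simp
    simp only [Pi.add_apply]; field_simp
  have h2 : Integrable (fun y : ℂ => gaussDensity (g i) y * Real.log (q y)) := by
    refine hD.mono ?_ (Filter.Eventually.of_forall fun y => ?_)
    · exact ((gd_cont (g i)).mul
        (hq_cont.log fun y => ne_of_gt (hq_pos y))).aestronglyMeasurable
    · have hCt : (0:ℝ) ≤ C + (‖y‖) ^ 2 / g i := by
        have := (abs_nonneg (Real.log (q y))).trans (habs_logq y)
        linarith
      rw [Real.norm_eq_abs, Real.norm_eq_abs, abs_mul,
        abs_of_nonneg (gd_pos hgi y).le,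
        abs_of_nonneg (mul_nonneg (gd_pos hgi y).le hCt)]
      exact mul_le_mul_of_nonneg_left (habs_logq y) (gd_pos hgi y).le
  have h3eq : (fun y : ℂ => gaussDensity (g i) y * q y)
      = fun y : ℂ => (1 / (S:ℝ)) * ∑ j, gaussDensity (g i) y * gaussDensity (g j) y := by
    funext y
    rw [hq_def, Finset.mul_sum]
    simp only [one_div]
    rw [← Finset.mul_sum, ← mul_assoc, Finset.mul_sum, Finset.mul_sum]
    exact Finset.sum_congr rfl fun j _ => by ring
  have h3 : Integrable (fun y : ℂ => gaussDensity (g i) y * q y) := by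
    rw [h3eq]
    exact (integrable_finset_sum _ fun j _ => integrable_gauss_mul_gauss hgi (hg j)).const_mul _
  set c : ℝ := (1 / (S:ℝ)) * ∑ j : Fin S, (Real.pi * (g i + g j))⁻¹ with hc_def
  have hc_pos : 0 < c :=
    mul_pos (by positivity)
      (Finset.sum_pos (fun j _ => by have := hg j; positivity) Finset.univ_nonempty)
  have hc_val : ∫ y : ℂ, gaussDensity (g i) y * q y = c := by
    rw [h3eq, MeasureTheory.integral_const_mul,
      MeasureTheory.integral_finset_sum _ fun j _ => integrable_gauss_mul_gauss hgi (hg j),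
      hc_def]
    congr 1
    exact Finset.sum_congr rfl fun j _ => integral_gauss_mul_gauss hgi (hg j)
  -- the Gibbs-type bound ∫ f log q ≤ log c
  have hgibbs : ∫ y : ℂ, gaussDensity (g i) y * Real.log (q y) ≤ Real.log c := by
    have hrhs : Integrable (fun y : ℂ =>
        (Real.log c - 1) * gaussDensity (g i) y + c⁻¹ * (gaussDensity (g i) y * q y)) :=
      ((integrable_gauss hgi).const_mul _).add (h3.const_mul _)
    have hpt : ∀ y : ℂ, gaussDensity (g i) y * Real.log (q y)
        ≤ (Real.log c - 1) * gaussDensity (g i) y + c⁻¹ * (gaussDensity (g i) y * q y) := by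
      intro y
      have hlq : Real.log (q y) ≤ Real.log c - 1 + q y / c := by
        have := Real.log_le_sub_one_of_pos (div_pos (hq_pos y) hc_pos)
        rw [Real.log_div (ne_of_gt (hq_pos y)) (ne_of_gt hc_pos)] at this
        linarith
      calc gaussDensity (g i) y * Real.log (q y)
          ≤ gaussDensity (g i) y * (Real.log c - 1 + q y / c) :=
            mul_le_mul_of_nonneg_left hlq (gd_pos hgi y).le
        _ = (Real.log c - 1) * gaussDensity (g i) y + c⁻¹ * (gaussDensity (g i) y * q y) := by
            field_simp
    calc ∫ y : ℂ, gaussDensity (g i) y * Real.log (q y)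
        ≤ ∫ y : ℂ, ((Real.log c - 1) * gaussDensity (g i) y
            + c⁻¹ * (gaussDensity (g i) y * q y)) :=
          MeasureTheory.integral_mono h2 hrhs hpt
      _ = Real.log c := by
          rw [MeasureTheory.integral_add ((integrable_gauss hgi).const_mul _) (h3.const_mul _),
            MeasureTheory.integral_const_mul, MeasureTheory.integral_const_mul,
            integral_gauss hgi, hc_val]
          field_simp; ring
  -- the value of ∫ f log f
  have hent : ∫ y : ℂ, gaussDensity (g i) y * Real.log (gaussDensity (g i) y)
      = -Real.log (Real.pi * g i) - 1 := integral_gauss_mul_log_gauss hgi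
  -- relate c to the SINR sum
  set Ssum : ℝ := ∑ j : Fin S, g i / (g i + g j) with hSs_def
  have hSs_pos : 0 < Ssum :=
    Finset.sum_pos (fun j _ => by have := hg j; positivity) Finset.univ_nonempty
  have hc_eq : (S:ℝ) * (Real.pi * g i) * c = Ssum := by
    rw [hc_def, hSs_def, Finset.mul_sum, Finset.mul_sum]
    refine Finset.sum_congr rfl fun j _ => ?_
    have := hg j
    have hij : g i + g j ≠ 0 := by positivity
    field_simp
  have hlogSs : Real.log Ssum = Real.log (S:ℝ) + Real.log (Real.pi * g i) + Real.log c := by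
    rw [← hc_eq, Real.log_mul (by positivity) (ne_of_gt hc_pos),
      Real.log_mul (ne_of_gt hS0) (by positivity)]
  have hlog2 : (0:ℝ) < Real.log 2 := Real.log_pos one_lt_two
  -- assemble
  have hmain : Real.logb 2 ((S : ℝ) / Real.exp 1) - Real.logb 2 Ssum
      = (Real.log 2)⁻¹ * ((-Real.log (Real.pi * g i) - 1) - Real.log c) := by
    rw [← Real.log_div_log, ← Real.log_div_log,
      Real.log_div (ne_of_gt hS0) (Real.exp_ne_zero 1), Real.log_exp]
    field_simp
    linarith
  rw [ge_iff_le, hmain]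
  have hstep : (Real.log 2)⁻¹ * ((-Real.log (Real.pi * g i) - 1) - Real.log c)
      ≤ (Real.log 2)⁻¹ * ((∫ y : ℂ, gaussDensity (g i) y * Real.log (gaussDensity (g i) y))
          - ∫ y : ℂ, gaussDensity (g i) y * Real.log (q y)) := by
    apply mul_le_mul_of_nonneg_left _ (inv_nonneg.2 hlog2.le)
    rw [hent]
    linarith
  refine hstep.trans (le_of_eq ?_)
  rw [← MeasureTheory.integral_sub h1 h2, ← MeasureTheory.integral_const_mul]
  refine MeasureTheory.integral_congr_ae (Filter.Eventually.of_forall fun y => ?_)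
  have hfq : gaussDensity (g i) y / q y > 0 := div_pos (gd_pos hgi y) (hq_pos y)
  show (Real.log 2)⁻¹ * (gaussDensity (g i) y * Real.log (gaussDensity (g i) y)
      - gaussDensity (g i) y * Real.log (q y))
    = gaussDensity (g i) y * Real.logb 2 (gaussDensity (g i) y / q y)
  rw [← Real.log_div_log, Real.log_div (ne_of_gt (gd_pos hgi y)) (ne_of_gt (hq_pos y))]
  ring

/-- Lemma 3, rigorous lower-bound content: the multi-user sum of the
spatial-index mutual informations is bounded below by the SINR-based closed form. -/
theorem stmt16 (U S : ℕ) (hU : 1 ≤ U) (hS : 1 ≤ S)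
    (γ : Fin U → Fin S → ℝ) (hγ : ∀ u i, 0 < γ u i) :
    ∑ u, ((1 / (S : ℝ)) * ∑ i, ∫ y : ℂ,
        gaussDensity (γ u i) y *
          Real.logb 2 (gaussDensity (γ u i) y / ((1 / (S : ℝ)) * ∑ j, gaussDensity (γ u j) y)))
      ≥ ∑ u, (Real.logb 2 ((S : ℝ) / Real.exp 1)
        - (1 / (S : ℝ)) * ∑ i, Real.logb 2 (∑ j, γ u i / (γ u i + γ u j))) := by
  have hS0 : (0:ℝ) < (S:ℝ) := by exact_mod_cast hS
  refine Finset.sum_le_sum fun u _ => ?_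
  have hkey : ∀ i : Fin S,
      Real.logb 2 ((S : ℝ) / Real.exp 1) - Real.logb 2 (∑ j, γ u i / (γ u i + γ u j))
      ≤ ∫ y : ℂ, gaussDensity (γ u i) y *
          Real.logb 2 (gaussDensity (γ u i) y / ((1 / (S : ℝ)) * ∑ j, gaussDensity (γ u j) y)) :=
    fun i => key_estimate hS (γ u) (hγ u) i
  have h1 : ∑ i : Fin S, (Real.logb 2 ((S : ℝ) / Real.exp 1)
      - Real.logb 2 (∑ j, γ u i / (γ u i + γ u j)))
      ≤ ∑ i : Fin S, ∫ y : ℂ, gaussDensity (γ u i) y *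
          Real.logb 2 (gaussDensity (γ u i) y / ((1 / (S : ℝ)) * ∑ j, gaussDensity (γ u j) y)) :=
    Finset.sum_le_sum fun i _ => hkey i
  have h2 : ∑ i : Fin S, (Real.logb 2 ((S : ℝ) / Real.exp 1)
      - Real.logb 2 (∑ j, γ u i / (γ u i + γ u j)))
      = (S:ℝ) * Real.logb 2 ((S : ℝ) / Real.exp 1)
        - ∑ i : Fin S, Real.logb 2 (∑ j, γ u i / (γ u i + γ u j)) := by
    rw [Finset.sum_sub_distrib, Finset.sum_const, Finset.card_univ, Fintype.card_fin,
      nsmul_eq_mul]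
  calc Real.logb 2 ((S : ℝ) / Real.exp 1)
        - (1 / (S : ℝ)) * ∑ i, Real.logb 2 (∑ j, γ u i / (γ u i + γ u j))
      = (1 / (S:ℝ)) * ((S:ℝ) * Real.logb 2 ((S : ℝ) / Real.exp 1)
        - ∑ i : Fin S, Real.logb 2 (∑ j, γ u i / (γ u i + γ u j))) := by
        field_simp
    _ ≤ (1 / (S : ℝ)) * ∑ i, ∫ y : ℂ, gaussDensity (γ u i) y *
          Real.logb 2 (gaussDensity (γ u i) y / ((1 / (S : ℝ)) * ∑ j, gaussDensity (γ u j) y)) := by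
        rw [← h2]
        exact mul_le_mul_of_nonneg_left h1 (by positivity)
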